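/- arXiv:2412.19681 — 3 statements merged into one kernel-verified Lean document; each statement's English description precedes it below -/
import Mathlib

section
/- A linear map g ∈ GL(d+2, ℝ) maps the real null cone {v : η(v,v) = 0} of a nondegenerate real quadratic form η of signature (p+1, q+1) (with p+1, q+1 ≥ 1) into itself if and only if there exists a nonzero real constant C such that η(gv, gv) = C·η(v,v) for all v. -/
open scoped BigOperators

/-- The quadratic form of signature `(p+1, q+1)` on `ℝ^{d+2}`, `d = p + q`. -/
noncomputable def etaQ (p q : ℕ) (v : Fin (p + 1 + (q + 1)) → ℝ) : ℝ :=
  ∑ i : Fin (p + 1 + (q + 1)), (if (i : ℕ) < p + 1 then (1 : ℝ) else -1) * v i * v i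

namespace NullConeAux

variable (p q : ℕ)

/-- The signs of the signature. -/
def eps (i : Fin (p + 1 + (q + 1))) : ℝ := if (i : ℕ) < p + 1 then 1 else -1

/-- The polar bilinear form. -/
noncomputable def Bf (u w : Fin (p + 1 + (q + 1)) → ℝ) : ℝ :=
  ∑ k, eps p q k * u k * w k

lemma etaQ_eq (v : Fin (p + 1 + (q + 1)) → ℝ) : etaQ p q v = Bf p q v v := rfl

lemma Bf_add_left (u u' w : Fin (p + 1 + (q + 1)) → ℝ) :
    Bf p q (u + u') w = Bf p q u w + Bf p q u' w := by
  unfold Bf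
  rw [← Finset.sum_add_distrib]
  exact Finset.sum_congr rfl fun k _ => by simp; ring

lemma Bf_add_right (u w w' : Fin (p + 1 + (q + 1)) → ℝ) :
    Bf p q u (w + w') = Bf p q u w + Bf p q u w' := by
  unfold Bf
  rw [← Finset.sum_add_distrib]
  exact Finset.sum_congr rfl fun k _ => by simp; ring

lemma Bf_smul_left (c : ℝ) (u w : Fin (p + 1 + (q + 1)) → ℝ) :
    Bf p q (c • u) w = c * Bf p q u w := by
  unfold Bf
  rw [Finset.mul_sum]
  exact Finset.sum_congr rfl fun k _ => by simp; ring

lemma Bf_smul_right (c : ℝ) (u w : Fin (p + 1 + (q + 1)) → ℝ) :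
    Bf p q u (c • w) = c * Bf p q u w := by
  unfold Bf
  rw [Finset.mul_sum]
  exact Finset.sum_congr rfl fun k _ => by simp; ring

lemma Bf_comm (u w : Fin (p + 1 + (q + 1)) → ℝ) : Bf p q u w = Bf p q w u := by
  exact Finset.sum_congr rfl fun k _ => by ring

lemma Bf_single_single (i j : Fin (p + 1 + (q + 1))) (a b : ℝ) :
    Bf p q (Pi.single i a) (Pi.single j b) = if i = j then eps p q i * a * b else 0 := by
  unfold Bf
  rw [Finset.sum_eq_single i]
  · by_cases h : i = j <;> simp [h, Pi.single_apply]
  · intro k _ hk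
    simp [Pi.single_apply, Ne.symm hk]
  · simp

lemma Bf_sum_left {α : Type*} (s : Finset α) (f : α → Fin (p + 1 + (q + 1)) → ℝ)
    (w : Fin (p + 1 + (q + 1)) → ℝ) :
    Bf p q (∑ x ∈ s, f x) w = ∑ x ∈ s, Bf p q (f x) w := by
  unfold Bf
  simp only [Finset.sum_apply, Finset.mul_sum, Finset.sum_mul]
  rw [Finset.sum_comm]

lemma Bf_sum_right {α : Type*} (s : Finset α) (f : α → Fin (p + 1 + (q + 1)) → ℝ)
    (u : Fin (p + 1 + (q + 1)) → ℝ) :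
    Bf p q u (∑ x ∈ s, f x) = ∑ x ∈ s, Bf p q u (f x) := by
  unfold Bf
  simp only [Finset.sum_apply, Finset.mul_sum]
  rw [Finset.sum_comm]

lemma single_eq_smul (i : Fin (p + 1 + (q + 1))) (a : ℝ) :
    (Pi.single i a : Fin (p + 1 + (q + 1)) → ℝ)
      = a • (Pi.single i 1 : Fin (p + 1 + (q + 1)) → ℝ) := by
  funext k
  simp [Pi.single_apply]

lemma expand (g : (Fin (p + 1 + (q + 1)) → ℝ) ≃ₗ[ℝ] (Fin (p + 1 + (q + 1)) → ℝ))
    (v : Fin (p + 1 + (q + 1)) → ℝ) :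
    Bf p q (g v) (g v) = ∑ i, ∑ j, v i * v j *
      Bf p q (g (Pi.single i 1)) (g (Pi.single j 1)) := by
  have hv : v = ∑ i, v i • (Pi.single i (1 : ℝ) : Fin (p + 1 + (q + 1)) → ℝ) := by
    funext k
    simp [Finset.sum_apply, Pi.single_apply]
  conv_lhs => rw [hv]
  rw [map_sum]
  rw [Bf_sum_left, Finset.sum_congr rfl fun i _ => Bf_sum_right p q _ _ _]
  refine Finset.sum_congr rfl fun i _ => Finset.sum_congr rfl fun j _ => ?_
  rw [map_smul, map_smul, Bf_smul_left, Bf_smul_right]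
  ring

section Main

variable (g : (Fin (p + 1 + (q + 1)) → ℝ) ≃ₗ[ℝ] (Fin (p + 1 + (q + 1)) → ℝ))

/-- Two-index null-vector relation. -/
lemma two_rel (h : ∀ v, etaQ p q v = 0 → etaQ p q (g v) = 0) (i j : Fin (p + 1 + (q + 1))) (hij : i ≠ j) (a b : ℝ)
    (hnull : eps p q i * a * a + eps p q j * b * b = 0) :
    a * a * Bf p q (g (Pi.single i 1)) (g (Pi.single i 1))
      + 2 * (a * b) * Bf p q (g (Pi.single i 1)) (g (Pi.single j 1))
      + b * b * Bf p q (g (Pi.single j 1)) (g (Pi.single j 1)) = 0 := by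
  have hQ := h (Pi.single i a + Pi.single j b)
  have hQ0 : etaQ p q (Pi.single i a + Pi.single j b) = 0 := by
    rw [etaQ_eq, Bf_add_left, Bf_add_right, Bf_add_right]
    simp only [Bf_single_single, if_pos rfl, if_neg hij, if_neg (Ne.symm hij), if_true,
      eq_self_iff_true, add_zero, zero_add]
    linarith [hnull]
  have := hQ hQ0
  rw [etaQ_eq] at this
  rw [single_eq_smul p q i a, single_eq_smul p q j b] at this
  rw [map_add, map_smul, map_smul] at this
  rw [Bf_add_left, Bf_add_right, Bf_add_right] at this
  simp only [Bf_smul_left, Bf_smul_right] at this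
  rw [Bf_comm p q (g (Pi.single j 1)) (g (Pi.single i 1))] at this
  linear_combination this

/-- Three-index null-vector relation. -/
lemma three_rel (h : ∀ v, etaQ p q v = 0 → etaQ p q (g v) = 0) (i j k : Fin (p + 1 + (q + 1))) (hij : i ≠ j) (hik : i ≠ k) (hjk : j ≠ k)
    (a b c : ℝ)
    (hnull : eps p q i * a * a + eps p q j * b * b + eps p q k * c * c = 0) :
    a * a * Bf p q (g (Pi.single i 1)) (g (Pi.single i 1))
      + b * b * Bf p q (g (Pi.single j 1)) (g (Pi.single j 1))
      + c * c * Bf p q (g (Pi.single k 1)) (g (Pi.single k 1))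
      + 2 * (a * b) * Bf p q (g (Pi.single i 1)) (g (Pi.single j 1))
      + 2 * (a * c) * Bf p q (g (Pi.single i 1)) (g (Pi.single k 1))
      + 2 * (b * c) * Bf p q (g (Pi.single j 1)) (g (Pi.single k 1)) = 0 := by
  have hQ := h (Pi.single i a + Pi.single j b + Pi.single k c)
  have hQ0 : etaQ p q (Pi.single i a + Pi.single j b + Pi.single k c) = 0 := by
    rw [etaQ_eq]
    rw [Bf_add_left, Bf_add_left, Bf_add_right, Bf_add_right, Bf_add_right,
      Bf_add_right, Bf_add_right, Bf_add_right]
    simp only [Bf_single_single, if_pos rfl, if_neg hij, if_neg (Ne.symm hij),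
      if_neg hik, if_neg (Ne.symm hik), if_neg hjk, if_neg (Ne.symm hjk), if_true,
      eq_self_iff_true, add_zero, zero_add]
    linarith [hnull]
  have := hQ hQ0
  rw [etaQ_eq] at this
  rw [single_eq_smul p q i a, single_eq_smul p q j b, single_eq_smul p q k c] at this
  rw [map_add, map_add, map_smul, map_smul, map_smul] at this
  rw [Bf_add_left, Bf_add_left, Bf_add_right, Bf_add_right, Bf_add_right,
    Bf_add_right, Bf_add_right, Bf_add_right] at this
  simp only [Bf_smul_left, Bf_smul_right] at this
  rw [Bf_comm p q (g (Pi.single j 1)) (g (Pi.single i 1)),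
    Bf_comm p q (g (Pi.single k 1)) (g (Pi.single i 1)),
    Bf_comm p q (g (Pi.single k 1)) (g (Pi.single j 1))] at this
  linear_combination this

end Main

end NullConeAux

/-- A linear automorphism `g` of `ℝ^{d+2}` maps the null cone of the
nondegenerate indefinite form `η` of signature `(p+1, q+1)` into itself iff there is a
nonzero constant `C` with `η(gv, gv) = C·η(v,v)` for all `v`. -/
theorem nullCone_preserved_iff_conformal (p q : ℕ)
    (g : (Fin (p + 1 + (q + 1)) → ℝ) ≃ₗ[ℝ] (Fin (p + 1 + (q + 1)) → ℝ)) :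
    (∀ v, etaQ p q v = 0 → etaQ p q (g v) = 0) ↔
      ∃ C : ℝ, C ≠ 0 ∧ ∀ v, etaQ p q (g v) = C * etaQ p q v := by
  open NullConeAux in
  constructor
  · intro h
    set M : Fin (p + 1 + (q + 1)) → Fin (p + 1 + (q + 1)) → ℝ :=
      fun i j => Bf p q (g (Pi.single i 1)) (g (Pi.single j 1)) with hM
    -- the distinguished positive and negative indices
    have hP : (0 : ℕ) < p + 1 + (q + 1) := by omega
    have hN : p + 1 < p + 1 + (q + 1) := by omega
    set P : Fin (p + 1 + (q + 1)) := ⟨0, hP⟩ with hPdef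
    set N : Fin (p + 1 + (q + 1)) := ⟨p + 1, hN⟩ with hNdef
    have hepsP : eps p q P = 1 := by simp [eps, hPdef]
    have hepsN : eps p q N = -1 := by simp [eps, hNdef]
    -- Step A : mixed pairs
    have stepA : ∀ i j : Fin (p + 1 + (q + 1)), (i : ℕ) < p + 1 → ¬ ((j : ℕ) < p + 1) →
        M i j = 0 ∧ M j j = - M i i := by
      intro i j hi hj
      have hij : i ≠ j := by
        intro hcontra; rw [hcontra] at hi; exact hj hi
      have hei : eps p q i = 1 := by simp [eps, hi]
      have hej : eps p q j = -1 := by simp [eps, hj]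
      have t1 := two_rel p q g h i j hij 1 1 (by rw [hei, hej]; ring)
      have t2 := two_rel p q g h i j hij 1 (-1) (by rw [hei, hej]; ring)
      constructor
      · nlinarith [t1, t2]
      · nlinarith [t1, t2]
    set C : ℝ := M P P with hCdef
    have hPpos : (P : ℕ) < p + 1 := by simp [hPdef]
    have hNneg : ¬ ((N : ℕ) < p + 1) := by simp [hNdef]
    have hMNN : M N N = - C := by
      have := stepA P N hPpos hNneg
      rw [hCdef]; exact this.2
    -- diagonal entries
    have hdiag : ∀ i : Fin (p + 1 + (q + 1)), M i i = eps p q i * C := by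
      intro i
      by_cases hi : (i : ℕ) < p + 1
      · have := (stepA i N hi hNneg).2
        have hei : eps p q i = 1 := by simp [eps, hi]
        rw [hei]; nlinarith [this, hMNN]
      · have := (stepA P i hPpos hi).2
        have hei : eps p q i = -1 := by simp [eps, hi]
        rw [hei, hCdef]; linarith [this]
    -- off-diagonal entries
    have hoff : ∀ i j : Fin (p + 1 + (q + 1)), i ≠ j → M i j = 0 := by
      intro i j hij
      by_cases hi : (i : ℕ) < p + 1
      · by_cases hj : (j : ℕ) < p + 1
        · -- both positive: use N as third index
          have hiN : i ≠ N := by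
            intro hcontra; rw [hcontra] at hi; exact hNneg hi
          have hjN : j ≠ N := by
            intro hcontra; rw [hcontra] at hj; exact hNneg hj
          have hei : eps p q i = 1 := by simp [eps, hi]
          have hej : eps p q j = 1 := by simp [eps, hj]
          have hsq : Real.sqrt 2 * Real.sqrt 2 = 2 :=
            Real.mul_self_sqrt (by norm_num : (0:ℝ) ≤ 2)
          have t := three_rel p q g h i j N hij hiN hjN 1 1 (Real.sqrt 2)
            (by rw [hei, hej, hepsN]; linear_combination (-1 : ℝ) * hsq)
          rw [hsq] at t
          have hMap : ∀ a b : Fin (p + 1 + (q + 1)),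
              Bf p q (g (Pi.single a 1)) (g (Pi.single b 1)) = M a b := fun _ _ => rfl
          simp only [hMap] at t
          have hMiN : M i N = 0 := (stepA i N hi hNneg).1
          have hMjN : M j N = 0 := (stepA j N hj hNneg).1
          have hMii := hdiag i
          have hMjj := hdiag j
          rw [hei] at hMii; rw [hej] at hMjj
          rw [hMiN, hMjN] at t
          linarith [t, hMii, hMjj, hMNN]
        · exact (stepA i j hi hj).1
      · by_cases hj : (j : ℕ) < p + 1
        · have hcomm : M i j = M j i := Bf_comm p q _ _
          rw [hcomm]
          exact (stepA j i hj hi).1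
        · -- both negative: use P as third index
          have hiP : i ≠ P := by
            intro hcontra; rw [hcontra] at hi; exact hi hPpos
          have hjP : j ≠ P := by
            intro hcontra; rw [hcontra] at hj; exact hj hPpos
          have hei : eps p q i = -1 := by simp [eps, hi]
          have hej : eps p q j = -1 := by simp [eps, hj]
          have hsq : Real.sqrt 2 * Real.sqrt 2 = 2 :=
            Real.mul_self_sqrt (by norm_num : (0:ℝ) ≤ 2)
          have t := three_rel p q g h i j P hij hiP hjP 1 1 (Real.sqrt 2)
            (by rw [hei, hej, hepsP]; linear_combination hsq)
          rw [hsq] at t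
          have hMap : ∀ a b : Fin (p + 1 + (q + 1)),
              Bf p q (g (Pi.single a 1)) (g (Pi.single b 1)) = M a b := fun _ _ => rfl
          simp only [hMap] at t
          have hMiP : M i P = 0 := by
            have hcomm : M i P = M P i := Bf_comm p q _ _
            rw [hcomm]; exact (stepA P i hPpos hi).1
          have hMjP : M j P = 0 := by
            have hcomm : M j P = M P j := Bf_comm p q _ _
            rw [hcomm]; exact (stepA P j hPpos hj).1
          have hMii := hdiag i
          have hMjj := hdiag j
          rw [hei] at hMii; rw [hej] at hMjj
          rw [hMiP, hMjP] at t
          linarith [t, hMii, hMjj]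
    -- conformality
    have hconf : ∀ v, etaQ p q (g v) = C * etaQ p q v := by
      intro v
      rw [etaQ_eq, expand]
      have : ∀ i : Fin (p + 1 + (q + 1)),
          (∑ j, v i * v j * M i j) = v i * v i * (eps p q i * C) := by
        intro i
        rw [Finset.sum_eq_single i]
        · rw [hdiag i]
        · intro j _ hji
          rw [hoff i j (Ne.symm hji), mul_zero]
        · simp
      rw [Finset.sum_congr rfl fun i _ => this i]
      unfold etaQ
      rw [Finset.mul_sum]
      refine Finset.sum_congr rfl fun i _ => ?_
      unfold eps
      ring
    refine ⟨C, ?_, hconf⟩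
    intro hC0
    have := hconf (g.symm (Pi.single P 1))
    rw [g.apply_symm_apply, hC0, zero_mul] at this
    rw [etaQ_eq, Bf_single_single] at this
    simp [hepsP] at this
  · rintro ⟨C, _, hC⟩ v hv
    rw [hC, hv, mul_zero]
end

section
/- Let g(χ₁,χ₂) = (sinh²(χ₁/2)sinh²(χ₂/2), cosh²(χ₁/2)cosh²(χ₂/2)) on D = {(χ₁,χ₂) ∈ ℂ² : χ₁, χ₂, (χ₁±χ₂)/2 ∉ iπℤ}. If g(χ₁,χ₂) = g(χ'₁,χ'₂), then (χ'₁,χ'₂) is obtained from (χ₁,χ₂) by a composition of the transformations (χ₁,χ₂) ↦ (χ₂,χ₁), (χ₁,χ₂) ↦ (−χ₁,χ₂), (χ₁,χ₂) ↦ (χ₁,−χ₂), and translations by elements of (2πiℤ)². -/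
open Complex

/-- The map `g(χ₁,χ₂) = (sinh²(χ₁/2)sinh²(χ₂/2), cosh²(χ₁/2)cosh²(χ₂/2))`. -/
noncomputable def gmap : ℂ × ℂ → ℂ × ℂ := fun χ =>
  (Complex.sinh (χ.1 / 2) ^ 2 * Complex.sinh (χ.2 / 2) ^ 2,
   Complex.cosh (χ.1 / 2) ^ 2 * Complex.cosh (χ.2 / 2) ^ 2)

/-- The domain `D = {(χ₁,χ₂) : χ₁, χ₂, (χ₁±χ₂)/2 ∉ iπℤ}`. -/
def Dset : Set (ℂ × ℂ) :=
  {χ | (∀ k : ℤ, χ.1 ≠ (Real.pi : ℂ) * Complex.I * k) ∧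
       (∀ k : ℤ, χ.2 ≠ (Real.pi : ℂ) * Complex.I * k) ∧
       (∀ k : ℤ, (χ.1 + χ.2) / 2 ≠ (Real.pi : ℂ) * Complex.I * k) ∧
       (∀ k : ℤ, (χ.1 - χ.2) / 2 ≠ (Real.pi : ℂ) * Complex.I * k)}

/-- The generating transformations: the swap `(χ₁,χ₂) ↦ (χ₂,χ₁)`, the sign flips
`(χ₁,χ₂) ↦ (−χ₁,χ₂)` and `(χ₁,χ₂) ↦ (χ₁,−χ₂)`, and the translations by `(2πiℤ)²`. -/
noncomputable def symGens : Set (Equiv.Perm (ℂ × ℂ)) :=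
  {Equiv.prodComm ℂ ℂ,
   (Equiv.neg ℂ).prodCongr (Equiv.refl ℂ),
   (Equiv.refl ℂ).prodCongr (Equiv.neg ℂ)} ∪
  {e | ∃ k l : ℤ, e = Equiv.addLeft
      ((2 * (Real.pi : ℂ) * Complex.I * k, 2 * (Real.pi : ℂ) * Complex.I * l) : ℂ × ℂ)}

lemma swap_mem : Equiv.prodComm ℂ ℂ ∈ Subgroup.closure symGens :=
  Subgroup.subset_closure (Set.mem_union_left _ (by simp))

lemma neg1_mem : (Equiv.neg ℂ).prodCongr (Equiv.refl ℂ) ∈ Subgroup.closure symGens :=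
  Subgroup.subset_closure (Set.mem_union_left _ (by simp))

lemma neg2_mem : (Equiv.refl ℂ).prodCongr (Equiv.neg ℂ) ∈ Subgroup.closure symGens :=
  Subgroup.subset_closure (Set.mem_union_left _ (by simp))

lemma trans_mem (k l : ℤ) :
    Equiv.addLeft ((2 * (Real.pi : ℂ) * Complex.I * k,
      2 * (Real.pi : ℂ) * Complex.I * l) : ℂ × ℂ) ∈ Subgroup.closure symGens :=
  Subgroup.subset_closure (Set.mem_union_right _ ⟨k, l, rfl⟩)

lemma cosh_eq_aux (a b : ℂ) (h : Complex.cosh a = Complex.cosh b) :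
    ∃ k : ℤ, b = a - 2 * k * (Real.pi : ℂ) * I ∨ b = -a - 2 * k * (Real.pi : ℂ) * I := by
  rw [← Complex.cos_mul_I, ← Complex.cos_mul_I, Complex.cos_eq_cos_iff] at h
  obtain ⟨k, hk | hk⟩ := h
  · exact ⟨k, Or.inl (by linear_combination (-I) * hk + (b - a) * Complex.I_sq)⟩
  · exact ⟨k, Or.inr (by linear_combination (-I) * hk + (b + a) * Complex.I_sq)⟩

lemma step (a b a' b' : ℂ)
    (h1 : ∃ k : ℤ, a' = a - 2 * k * (Real.pi : ℂ) * I ∨ a' = -a - 2 * k * (Real.pi : ℂ) * I)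
    (h2 : ∃ l : ℤ, b' = b - 2 * l * (Real.pi : ℂ) * I ∨ b' = -b - 2 * l * (Real.pi : ℂ) * I) :
    ∃ w ∈ Subgroup.closure symGens, w (a, b) = (a', b') := by
  obtain ⟨k, hk | hk⟩ := h1 <;> obtain ⟨l, hl | hl⟩ := h2
  · refine ⟨_, trans_mem (-k) (-l), ?_⟩
    simp only [Equiv.coe_addLeft, Prod.mk_add_mk, Prod.mk.injEq]
    constructor <;> push_cast
    · linear_combination -hk
    · linear_combination -hl
  · refine ⟨_, mul_mem (trans_mem (-k) (-l)) neg2_mem, ?_⟩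
    simp only [Equiv.Perm.mul_apply, Equiv.prodCongr_apply, Equiv.coe_refl, Equiv.neg_apply,
      Prod.map_apply, id_eq, Equiv.coe_addLeft, Prod.mk_add_mk, Prod.mk.injEq]
    constructor <;> push_cast
    · linear_combination -hk
    · linear_combination -hl
  · refine ⟨_, mul_mem (trans_mem (-k) (-l)) neg1_mem, ?_⟩
    simp only [Equiv.Perm.mul_apply, Equiv.prodCongr_apply, Equiv.coe_refl, Equiv.neg_apply,
      Prod.map_apply, id_eq, Equiv.coe_addLeft, Prod.mk_add_mk, Prod.mk.injEq]
    constructor <;> push_cast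
    · linear_combination -hk
    · linear_combination -hl
  · refine ⟨_, mul_mem (mul_mem (trans_mem (-k) (-l)) neg1_mem) neg2_mem, ?_⟩
    simp only [Equiv.Perm.mul_apply, Equiv.prodCongr_apply, Equiv.coe_refl, Equiv.neg_apply,
      Prod.map_apply, id_eq, Equiv.coe_addLeft, Prod.mk_add_mk, Prod.mk.injEq]
    constructor <;> push_cast
    · linear_combination -hk
    · linear_combination -hl

/-- If `g(χ₁,χ₂) = g(χ'₁,χ'₂)` on `D`, then `(χ'₁,χ'₂)` is obtained from
`(χ₁,χ₂)` by a composition of the swap, the sign flips of the coordinates, and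
translations by elements of `(2πiℤ)²`. -/
theorem gmap_fibres (χ χ' : ℂ × ℂ) (hχ : χ ∈ Dset) (hχ' : χ' ∈ Dset)
    (h : gmap χ = gmap χ') :
    ∃ w ∈ Subgroup.closure symGens, w χ = χ' := by
  obtain ⟨a, b⟩ := χ
  obtain ⟨a', b'⟩ := χ'
  simp only [gmap, Prod.mk.injEq] at h
  obtain ⟨h1, h2⟩ := h
  -- abbreviations
  set s1 := Complex.sinh (a / 2) with hs1
  set s2 := Complex.sinh (b / 2) with hs2
  set t1 := Complex.sinh (a' / 2) with ht1
  set t2 := Complex.sinh (b' / 2) with ht2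
  have q1 : Complex.cosh (a / 2) ^ 2 = s1 ^ 2 + 1 := by
    rw [hs1]; linear_combination Complex.cosh_sq_sub_sinh_sq (a / 2)
  have q2 : Complex.cosh (b / 2) ^ 2 = s2 ^ 2 + 1 := by
    rw [hs2]; linear_combination Complex.cosh_sq_sub_sinh_sq (b / 2)
  have q1' : Complex.cosh (a' / 2) ^ 2 = t1 ^ 2 + 1 := by
    rw [ht1]; linear_combination Complex.cosh_sq_sub_sinh_sq (a' / 2)
  have q2' : Complex.cosh (b' / 2) ^ 2 = t2 ^ 2 + 1 := by
    rw [ht2]; linear_combination Complex.cosh_sq_sub_sinh_sq (b' / 2)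
  have hsum : s1 ^ 2 + s2 ^ 2 = t1 ^ 2 + t2 ^ 2 := by
    linear_combination h2 - h1 - Complex.cosh (b / 2) ^ 2 * q1 - (s1 ^ 2 + 1) * q2 +
      Complex.cosh (b' / 2) ^ 2 * q1' + (t1 ^ 2 + 1) * q2'
  -- cosh relations
  have ru1 : Complex.cosh a = 2 * s1 ^ 2 + 1 := by
    have hA := Complex.cosh_two_mul (a / 2)
    rw [show 2 * (a / 2) = a by ring] at hA
    rw [hA, q1]; ring
  have ru2 : Complex.cosh b = 2 * s2 ^ 2 + 1 := by
    have hA := Complex.cosh_two_mul (b / 2)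
    rw [show 2 * (b / 2) = b by ring] at hA
    rw [hA, q2]; ring
  have ru1' : Complex.cosh a' = 2 * t1 ^ 2 + 1 := by
    have hA := Complex.cosh_two_mul (a' / 2)
    rw [show 2 * (a' / 2) = a' by ring] at hA
    rw [hA, q1']; ring
  have ru2' : Complex.cosh b' = 2 * t2 ^ 2 + 1 := by
    have hA := Complex.cosh_two_mul (b' / 2)
    rw [show 2 * (b' / 2) = b' by ring] at hA
    rw [hA, q2']; ring
  have key : (Complex.cosh a - Complex.cosh a') * (Complex.cosh a - Complex.cosh b') = 0 := by
    rw [ru1, ru1', ru2']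
    linear_combination 4 * s1 ^ 2 * hsum - 4 * h1
  rcases mul_eq_zero.mp key with hA | hA
  · -- cosh a = cosh a', cosh b = cosh b'
    have hA1 : Complex.cosh a = Complex.cosh a' := by linear_combination hA
    have hA2 : Complex.cosh b = Complex.cosh b' := by
      rw [ru2, ru2']
      have : 2 * t1 ^ 2 + 1 = 2 * s1 ^ 2 + 1 := by rw [← ru1, ← ru1', hA1]
      linear_combination 2 * hsum + this
    exact step a b a' b' (cosh_eq_aux a a' hA1) (cosh_eq_aux b b' hA2)
  · -- cosh a = cosh b', cosh b = cosh a'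
    have hA1 : Complex.cosh a = Complex.cosh b' := by linear_combination hA
    have hA2 : Complex.cosh b = Complex.cosh a' := by
      rw [ru2, ru1']
      have : 2 * t2 ^ 2 + 1 = 2 * s1 ^ 2 + 1 := by rw [← ru1, ← ru2', hA1]
      linear_combination 2 * hsum + this
    obtain ⟨w, hw, hwe⟩ := step b a a' b' (cosh_eq_aux b a' hA2) (cosh_eq_aux a b' hA1)
    refine ⟨w * Equiv.prodComm ℂ ℂ, mul_mem hw swap_mem, ?_⟩
    simpa using hwe
end

section
/- Let x = exp(a F_{0,d} + b F_{1,d+1}) ∈ SO(p+1,q+1)₀ (q ≥ 1), a one-parameter-type element whose matrix has corner entries A = cosh(a), I = cosh(b), C = G = 0 (in the 1+d+1 block decomposition). Then the cross ratios are u = 4/(cosh(a)−cosh(b))² = csch²((a+b)/2)·csch²((a−b)/2) and v = (cosh(a)+cosh(b))²/(cosh(a)−cosh(b))² = coth²((a+b)/2)·coth²((a−b)/2), whenever a ± b ≠ 0. -/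
/-!
Both generators are, up to sign, boosts `B = e_ij + e_ji` (matrix units) in planes spanned by one
basis vector of each sign of the metric, and the two planes are disjoint. Since `B ^ 3 = B`, the
exponential series of `t • B` splits into an odd part `sinh t • B` and an even part
`1 + (cosh t - 1) • B ^ 2`; since the two boosts annihilate each other, the exponential of their
combination is `exp (s • B₁) + exp (t • B₂) - 1`. Reading off the corners gives `A = cosh a`,
`I = cosh b`, `C = G = 0`, and the cross ratios follow from the sum-to-product formulas for
`cosh a ± cosh b`.
-/

open Matrix

/-- Sign of the `μ`-th basis vector for the metric `η = diag(1^{p+1}, (−1)^{q+1})`. -/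
def etaSign (p : ℕ) {n : ℕ} (μ : Fin n) : ℝ := if (μ : ℕ) < p + 1 then 1 else -1

/-- Metric coefficients `η_{μν} = δ_{μν}·etaSign μ`. -/
def etaDelta (p : ℕ) {n : ℕ} (μ ν : Fin n) : ℝ := if μ = ν then etaSign p μ else 0

/-- The matrix `E_{μν}` with entries `(E_{μν})^σ_ρ = δ^σ_μ η_{νρ}`. -/
def Emat (p q : ℕ) (μ ν : Fin (p + 1 + (q + 1))) :
    Matrix (Fin (p + 1 + (q + 1))) (Fin (p + 1 + (q + 1))) ℝ :=
  fun σ ρ => (if σ = μ then (1 : ℝ) else 0) * etaDelta p ν ρ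

/-- The standard generators `F_{μν} = E_{μν} − E_{νμ}` of `𝔰𝔬(p+1,q+1)`. -/
def Fmat (p q : ℕ) (μ ν : Fin (p + 1 + (q + 1))) :
    Matrix (Fin (p + 1 + (q + 1))) (Fin (p + 1 + (q + 1))) ℝ :=
  Emat p q μ ν - Emat p q ν μ

open NormedSpace in
theorem exp_smul_of_pow_three_eq_self {A : Type*} [NormedRing A] [NormedAlgebra ℝ A]
    [CompleteSpace A] {X : A} (hX : X ^ 3 = X) (t : ℝ) :
    exp (t • X) = 1 + Real.sinh t • X + (Real.cosh t - 1) • X ^ 2 := by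
  have hodd (k : ℕ) : X ^ (2 * k + 1) = X := by
    induction k with
    | zero => simp
    | succ k ih => rw [mul_add, add_right_comm, pow_add, ih, ← _root_.pow_succ', hX]
  have heven (k : ℕ) : X ^ (2 * k + 2) = X ^ 2 := by rw [pow_succ, hodd, sq]
  refine (exp_series_hasSum_exp' (𝕂 := ℝ) (t • X)).unique ?_
  rw [show 1 + Real.sinh t • X + (Real.cosh t - 1) • X ^ 2
      = (Real.cosh t • X ^ 2 + (1 - X ^ 2)) + Real.sinh t • X by module]
  refine HasSum.even_add_odd ?_ ?_
  · convert ((Real.hasSum_cosh t).smul_const (X ^ 2)).add (hasSum_ite_eq 0 (1 - X ^ 2)) using 1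
    funext k
    rcases k with _ | k
    · simp
    · rw [smul_pow, smul_smul, mul_add, heven, if_neg k.succ_ne_zero, add_zero, div_eq_inv_mul]
  · convert (Real.hasSum_sinh t).smul_const X using 1
    funext k
    rw [smul_pow, smul_smul, hodd, div_eq_inv_mul]

section Boost

variable {n : Type*} [Fintype n] [DecidableEq n]

def boost (i j : n) : Matrix n n ℝ := single i j 1 + single j i 1

lemma boost_sq {i j : n} (h : i ≠ j) : boost i j ^ 2 = single i i 1 + single j j 1 := by
  simp [boost, sq, add_mul, mul_add, h, h.symm, add_comm]

lemma boost_pow_three {i j : n} (h : i ≠ j) : boost i j ^ 3 = boost i j := by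
  rw [pow_succ, boost_sq h]
  simp [boost, add_mul, mul_add, h, h.symm, add_comm]

lemma boost_mul_boost {i j k l : n} (hik : i ≠ k) (hil : i ≠ l) (hjk : j ≠ k) (hjl : j ≠ l) :
    boost i j * boost k l = 0 := by
  simp [boost, add_mul, mul_add, hik, hil, hjk, hjl]

lemma exp_smul_boost {i j : n} (h : i ≠ j) (t : ℝ) :
    NormedSpace.exp (t • boost i j) =
      1 + Real.sinh t • boost i j + (Real.cosh t - 1) • boost i j ^ 2 := by
  let : NormedRing (Matrix n n ℝ) := Matrix.linftyOpNormedRing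
  let : NormedAlgebra ℝ (Matrix n n ℝ) := Matrix.linftyOpNormedAlgebra
  exact exp_smul_of_pow_three_eq_self (A := Matrix n n ℝ) (boost_pow_three h) t

lemma exp_smul_boost_add_smul_boost {i j k l : n} (hij : i ≠ j) (hkl : k ≠ l) (hik : i ≠ k)
    (hil : i ≠ l) (hjk : j ≠ k) (hjl : j ≠ l) (s t : ℝ) :
    NormedSpace.exp (s • boost i j + t • boost k l) =
      NormedSpace.exp (s • boost i j) + NormedSpace.exp (t • boost k l) - 1 := by
  have h₁₂ : boost i j * boost k l = 0 := boost_mul_boost hik hil hjk hjl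
  have h₂₁ : boost k l * boost i j = 0 := boost_mul_boost hik.symm hjk.symm hil.symm hjl.symm
  have h₁₂' (Y : Matrix n n ℝ) : boost i j * (boost k l * Y) = 0 := by
    rw [← mul_assoc, h₁₂, zero_mul]
  have hcomm : Commute (s • boost i j) (t • boost k l) := by
    rw [commute_iff_eq, smul_mul_smul_comm, smul_mul_smul_comm, h₁₂, h₂₁, smul_zero, smul_zero]
  rw [Matrix.exp_add_of_commute _ _ hcomm, exp_smul_boost hij, exp_smul_boost hkl]
  simp only [add_mul, mul_add, sq, smul_mul_smul_comm, mul_assoc, h₁₂, h₁₂', smul_zero, mul_zero,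
    mul_one, one_mul, add_zero]
  abel

lemma exp_smul_boost_add_smul_boost_corners {i j k l : n} (hij : i ≠ j) (hkl : k ≠ l)
    (hik : i ≠ k) (hil : i ≠ l) (hjk : j ≠ k) (hjl : j ≠ l) {s t : ℝ} {x : Matrix n n ℝ}
    (hx : x = NormedSpace.exp (s • boost i j + t • boost k l)) :
    x i i = Real.cosh s ∧ x l l = Real.cosh t ∧ x i l = 0 ∧ x l i = 0 := by
  rw [exp_smul_boost_add_smul_boost hij hkl hik hil hjk hjl, exp_smul_boost hij,
    exp_smul_boost hkl, boost_sq hij, boost_sq hkl] at hx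
  subst hx
  simp [boost, hkl, hil, hjl, hij.symm, hik.symm, hil.symm]

end Boost

lemma Fmat_eq_neg_boost (p q : ℕ) {μ ν : Fin (p + 1 + (q + 1))} (hμ : (μ : ℕ) < p + 1)
    (hν : p + 1 ≤ (ν : ℕ)) : Fmat p q μ ν = -boost μ ν := by
  have hημ : etaSign p μ = 1 := if_pos hμ
  have hην : etaSign p ν = -1 := if_neg hν.not_gt
  ext σ ρ
  simp only [Fmat, Emat, etaDelta, boost, single_apply, Matrix.sub_apply, Matrix.neg_apply,
    Matrix.add_apply]
  split_ifs <;> grind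

namespace Real

theorem cosh_sub_cosh (a b : ℝ) :
    cosh a - cosh b = 2 * sinh ((a + b) / 2) * sinh ((a - b) / 2) := by
  obtain ⟨u, v, rfl, rfl⟩ : ∃ u v, a = u + v ∧ b = u - v :=
    ⟨(a + b) / 2, (a - b) / 2, by ring, by ring⟩
  rw [show (u + v + (u - v)) / 2 = u by ring, show (u + v - (u - v)) / 2 = v by ring, cosh_add,
    cosh_sub]
  ring

theorem cosh_add_cosh (a b : ℝ) :
    cosh a + cosh b = 2 * cosh ((a + b) / 2) * cosh ((a - b) / 2) := by
  obtain ⟨u, v, rfl, rfl⟩ : ∃ u v, a = u + v ∧ b = u - v :=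
    ⟨(a + b) / 2, (a - b) / 2, by ring, by ring⟩
  rw [show (u + v + (u - v)) / 2 = u by ring, show (u + v - (u - v)) / 2 = v by ring, cosh_add,
    cosh_sub]
  ring

theorem four_div_cosh_sub_cosh_sq (a b : ℝ) :
    4 / (cosh a - cosh b) ^ 2 = (sinh ((a + b) / 2))⁻¹ ^ 2 * (sinh ((a - b) / 2))⁻¹ ^ 2 := by
  rw [cosh_sub_cosh]
  ring

theorem cosh_add_cosh_sq_div_cosh_sub_cosh_sq (a b : ℝ) :
    (cosh a + cosh b) ^ 2 / (cosh a - cosh b) ^ 2 =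
      (cosh ((a + b) / 2) / sinh ((a + b) / 2)) ^ 2 *
        (cosh ((a - b) / 2) / sinh ((a - b) / 2)) ^ 2 := by
  rw [cosh_add_cosh, cosh_sub_cosh]
  ring

end Real

/-- Let `x = exp(a F_{0,d} + b F_{1,d+1}) ∈ SO(p+1,q+1)₀` with `q ≥ 1`
(and `p ≥ q`, `d = p+q > 2`). In the `1+d+1` block decomposition, the corner entries are
`A = cosh a`, `I = cosh b`, `C = G = 0`, and whenever `a ± b ≠ 0` the cross ratios
`u = 4/((A−I)² − (C−G)²)` and `v = ((A+I)² − (C+G)²)/((A−I)² − (C−G)²)` satisfy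
`u = 4/(cosh a − cosh b)² = csch²((a+b)/2)·csch²((a−b)/2)` and
`v = (cosh a + cosh b)²/(cosh a − cosh b)² = coth²((a+b)/2)·coth²((a−b)/2)`. -/
theorem cartan_subset_cross_ratios (p q : ℕ) (hq : 1 ≤ q) (hqp : q ≤ p)
    (a b : ℝ) :
    ∀ x : Matrix (Fin (p + 1 + (q + 1))) (Fin (p + 1 + (q + 1))) ℝ,
      x = NormedSpace.exp
        (a • Fmat p q ⟨0, by omega⟩ ⟨p + q, by omega⟩ +
         b • Fmat p q ⟨1, by omega⟩ ⟨p + q + 1, by omega⟩) →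
      x ⟨0, by omega⟩ ⟨0, by omega⟩ = Real.cosh a ∧
      x ⟨p + q + 1, by omega⟩ ⟨p + q + 1, by omega⟩ = Real.cosh b ∧
      x ⟨0, by omega⟩ ⟨p + q + 1, by omega⟩ = 0 ∧
      x ⟨p + q + 1, by omega⟩ ⟨0, by omega⟩ = 0 ∧
      (a + b ≠ 0 → a - b ≠ 0 →
        (4 / ((x ⟨0, by omega⟩ ⟨0, by omega⟩ - x ⟨p + q + 1, by omega⟩ ⟨p + q + 1, by omega⟩) ^ 2
              - (x ⟨0, by omega⟩ ⟨p + q + 1, by omega⟩ - x ⟨p + q + 1, by omega⟩ ⟨0, by omega⟩) ^ 2)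
            = 4 / (Real.cosh a - Real.cosh b) ^ 2 ∧
          4 / (Real.cosh a - Real.cosh b) ^ 2
            = (Real.sinh ((a + b) / 2))⁻¹ ^ 2 * (Real.sinh ((a - b) / 2))⁻¹ ^ 2) ∧
        (((x ⟨0, by omega⟩ ⟨0, by omega⟩ + x ⟨p + q + 1, by omega⟩ ⟨p + q + 1, by omega⟩) ^ 2
              - (x ⟨0, by omega⟩ ⟨p + q + 1, by omega⟩ + x ⟨p + q + 1, by omega⟩ ⟨0, by omega⟩) ^ 2)
            / ((x ⟨0, by omega⟩ ⟨0, by omega⟩ - x ⟨p + q + 1, by omega⟩ ⟨p + q + 1, by omega⟩) ^ 2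
              - (x ⟨0, by omega⟩ ⟨p + q + 1, by omega⟩ - x ⟨p + q + 1, by omega⟩ ⟨0, by omega⟩) ^ 2)
            = (Real.cosh a + Real.cosh b) ^ 2 / (Real.cosh a - Real.cosh b) ^ 2 ∧
          (Real.cosh a + Real.cosh b) ^ 2 / (Real.cosh a - Real.cosh b) ^ 2
            = (Real.cosh ((a + b) / 2) / Real.sinh ((a + b) / 2)) ^ 2 *
                (Real.cosh ((a - b) / 2) / Real.sinh ((a - b) / 2)) ^ 2)) := by
  intro x hx
  rw [Fmat_eq_neg_boost p q (by dsimp; omega) (by dsimp; omega),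
    Fmat_eq_neg_boost p q (by dsimp; omega) (by dsimp; omega),
    smul_neg, smul_neg, ← neg_smul, ← neg_smul] at hx
  obtain ⟨e00, e11, e01, e10⟩ := exp_smul_boost_add_smul_boost_corners
    (Fin.ne_of_val_ne (by dsimp; omega)) (Fin.ne_of_val_ne (by dsimp; omega))
    (Fin.ne_of_val_ne (by dsimp; omega)) (Fin.ne_of_val_ne (by dsimp; omega))
    (Fin.ne_of_val_ne (by dsimp; omega)) (Fin.ne_of_val_ne (by dsimp; omega)) hx
  rw [Real.cosh_neg] at e00 e11
  refine ⟨e00, e11, e01, e10, fun _ _ => ?_⟩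
  rw [e00, e11, e01, e10]
  exact ⟨⟨by simp, Real.four_div_cosh_sub_cosh_sq a b⟩,
    ⟨by simp, Real.cosh_add_cosh_sq_div_cosh_sub_cosh_sq a b⟩⟩
end
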